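/- arXiv:2604.15922 — 3 statements merged into one kernel-verified Lean document; each statement's English description precedes it below -/
import Mathlib

section
/- Let f : ℕ × ℤ → ℝ and let Δ, L_b > 0. Suppose that for every k ∈ ℕ there is a unique ι*(k) ∈ ℤ maximizing i ↦ f(k, i), and that for all k and all i ∈ ℤ, L_b·((i + 1/2)Δ − ι*(k)·Δ)² ≤ (f(k,i) − f(k,i+1))·((i + 1/2)Δ − ι*(k)·Δ). Then for all k ∈ ℕ and i ∈ ℤ, f(k, ι*(k)) − f(k, i) ≥ (L_b·Δ/2)·(i − ι*(k))². -/
/-! Dividing the curvature inequality by the offset `(i + 1/2)Δ - ι*Δ`, whose sign is that of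
`i - ι*`, shows that `f` drops by at least `L_b Δ (n + 1/2)` on the `n`-th step away from the
maximizer, in either direction. Summing these drops telescopes to `L_b Δ n² / 2`. -/

theorem le_of_mul_sq_le_mul {L x d : ℝ} (hd : 0 < d) (h : L * d ^ 2 ≤ x * d) : L * d ≤ x :=
  le_of_mul_le_mul_right (by linarith) hd

theorem quadratic_drop_of_linear_steps {g : ℕ → ℝ} {c : ℝ}
    (hstep : ∀ n : ℕ, c * ((n : ℝ) + 1 / 2) ≤ g n - g (n + 1)) (n : ℕ) :
    c / 2 * (n : ℝ) ^ 2 ≤ g 0 - g n := by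
  induction n with
  | zero => simp
  | succ n ih =>
    have := hstep n
    push_cast
    linarith

theorem quadratic_growth_of_curvature {g : ℤ → ℝ} {Δ L : ℝ} {a : ℤ} (hΔ : 0 < Δ)
    (hcurv : ∀ i : ℤ,
      L * (((i : ℝ) + 1 / 2) * Δ - (a : ℝ) * Δ) ^ 2 ≤
        (g i - g (i + 1)) * (((i : ℝ) + 1 / 2) * Δ - (a : ℝ) * Δ))
    (i : ℤ) : L * Δ / 2 * ((i : ℝ) - (a : ℝ)) ^ 2 ≤ g a - g i := by
  have hoffset (n : ℕ) : 0 < ((n : ℝ) + 1 / 2) * Δ := by positivity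
  have step_right (n : ℕ) : L * Δ * ((n : ℝ) + 1 / 2) ≤ g (a + n) - g (a + n + 1) := by
    have h := hcurv (a + n)
    push_cast at h
    rw [show ((a : ℝ) + n + 1 / 2) * Δ - a * Δ = ((n : ℝ) + 1 / 2) * Δ by ring] at h
    linarith [le_of_mul_sq_le_mul (hoffset n) h]
  have step_left (n : ℕ) : L * Δ * ((n : ℝ) + 1 / 2) ≤ g (a - n) - g (a - n - 1) := by
    have h := hcurv (a - n - 1)
    rw [sub_add_cancel] at h
    push_cast at h
    rw [show ((a : ℝ) - n - 1 + 1 / 2) * Δ - a * Δ = -(((n : ℝ) + 1 / 2) * Δ) by ring,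
      mul_neg, neg_sq, ← neg_mul, neg_sub] at h
    linarith [le_of_mul_sq_le_mul (hoffset n) h]
  obtain ⟨n, hn | hn⟩ := Int.eq_nat_or_neg (i - a)
  · obtain rfl : i = a + n := by omega
    have := quadratic_drop_of_linear_steps (g := fun n : ℕ => g (a + n)) (c := L * Δ)
      (fun n => by simpa [add_assoc] using step_right n) n
    push_cast at this ⊢
    simpa using this
  · obtain rfl : i = a - n := by omega
    have := quadratic_drop_of_linear_steps (g := fun n : ℕ => g (a - n)) (c := L * Δ)
      (fun n => by simpa [sub_sub] using step_left n) n
    push_cast at this ⊢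
    simpa using this

theorem quadratic_growth_from_curvature_general (f : ℕ → ℤ → ℝ) (Δ Lb : ℝ)
    (hΔ : 0 < Δ) (ιs : ℕ → ℤ)
    (hcurv : ∀ k : ℕ, ∀ i : ℤ,
      Lb * (((i : ℝ) + 1 / 2) * Δ - (ιs k : ℝ) * Δ) ^ 2 ≤
        (f k i - f k (i + 1)) * (((i : ℝ) + 1 / 2) * Δ - (ιs k : ℝ) * Δ)) :
    ∀ k : ℕ, ∀ i : ℤ,
      f k (ιs k) - f k i ≥ Lb * Δ / 2 * ((i : ℝ) - (ιs k : ℝ)) ^ 2 :=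
  fun k => quadratic_growth_of_curvature hΔ (hcurv k)

/-- quadratic growth away from the unique maximizer, obtained by
    telescoping the curvature assumption. -/
theorem quadratic_growth_from_curvature (f : ℕ → ℤ → ℝ) (Δ Lb : ℝ)
    (hΔ : 0 < Δ) (hLb : 0 < Lb) (ιs : ℕ → ℤ)
    (hmax : ∀ k : ℕ, ∀ i : ℤ, i ≠ ιs k → f k i < f k (ιs k))
    (hcurv : ∀ k : ℕ, ∀ i : ℤ,
      Lb * (((i : ℝ) + 1 / 2) * Δ - (ιs k : ℝ) * Δ) ^ 2 ≤
        (f k i - f k (i + 1)) * (((i : ℝ) + 1 / 2) * Δ - (ιs k : ℝ) * Δ)) :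
    ∀ k : ℕ, ∀ i : ℤ,
      f k (ιs k) - f k i ≥ Lb * Δ / 2 * ((i : ℝ) - (ιs k : ℝ)) ^ 2 :=
  quadratic_growth_from_curvature_general f Δ Lb hΔ ιs hcurv
end

section
/- Let f : ℕ × ℤ → ℝ, let Δ, L_b, L_k > 0, and for each k let ι*(k) ∈ ℤ be the unique maximizer of i ↦ f(k,i). Assume: (a) f(k, ι*(k)) − f(k,i) ≥ (L_b·Δ/2)·(i − ι*(k))² for all k, i; (b) |f(k+1,i) − f(k,i)| ≤ L_k for all k, i. Then for all k, N ∈ ℕ: |ι*(k+N) − ι*(k)|·Δ ≤ 2·√(L_k·Δ·N/L_b). -/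
/-! At time `k` the future maximizer `ι*(k+N)` lies below `ι*(k)` by at least
`(L_b Δ / 2) (ι*(k+N) - ι*(k))²`, while at time `k + N` it lies above it. Each of the two values
moves by at most `N L_k` in `N` steps, so that gap is at most `2 N L_k`; solving for the
displacement gives the bound. -/

theorem dist_le_mul_of_dist_succ_le {α : Type*} [PseudoMetricSpace α] {g : ℕ → α} {L : ℝ}
    (h : ∀ n, dist (g n) (g (n + 1)) ≤ L) (k N : ℕ) : dist (g k) (g (k + N)) ≤ N * L := by
  simpa using dist_le_Ico_sum_of_dist_le (f := g) (Nat.le_add_right k N) (d := fun _ => L)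
    fun _ _ => h _

theorem abs_mul_le_two_mul_sqrt_of_quadratic_le {Lb Δ d M : ℝ} (hLb : 0 < Lb) (hΔ : 0 ≤ Δ)
    (h : Lb * Δ / 2 * d ^ 2 ≤ 2 * M) : |d| * Δ ≤ 2 * √(M * Δ / Lb) := by
  have hsq : (d * Δ / 2) ^ 2 ≤ M * Δ / Lb := by
    rw [le_div_iff₀ hLb]
    nlinarith [mul_le_mul_of_nonneg_right h hΔ]
  have := Real.abs_le_sqrt hsq
  rw [abs_div, abs_mul, abs_of_nonneg hΔ, abs_two] at this
  linarith

theorem maximizer_drift_bound_general (f : ℕ → ℤ → ℝ) (Δ Lb Lk : ℝ)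
    (hΔ : 0 < Δ) (hLb : 0 < Lb) (ιs : ℕ → ℤ)
    (ha : ∀ k : ℕ, ∀ i : ℤ,
      f k (ιs k) - f k i ≥ Lb * Δ / 2 * ((i : ℝ) - (ιs k : ℝ)) ^ 2)
    (hb : ∀ k : ℕ, ∀ i : ℤ, |f (k + 1) i - f k i| ≤ Lk) :
    ∀ k N : ℕ,
      |(ιs (k + N) : ℝ) - (ιs k : ℝ)| * Δ ≤ 2 * Real.sqrt (Lk * Δ * (N : ℝ) / Lb) := by
  intro k N
  have hdrift (i : ℤ) : |f k i - f (k + N) i| ≤ N * Lk :=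
    dist_le_mul_of_dist_succ_le (g := (f · i))
      (fun n => by rw [Real.dist_eq, abs_sub_comm]; exact hb n i) k N
  have hnew_max : f (k + N) (ιs k) ≤ f (k + N) (ιs (k + N)) :=
    sub_nonneg.1 (le_trans (by positivity) (ha (k + N) (ιs k)))
  have hgap := ha k (ιs (k + N))
  have hdrift_old := abs_le.1 (hdrift (ιs k))
  have hdrift_new := abs_le.1 (hdrift (ιs (k + N)))
  rw [show Lk * Δ * N = N * Lk * Δ by ring]
  exact abs_mul_le_two_mul_sqrt_of_quadratic_le hLb hΔ.le (by linarith)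

/-- Lemma 3: drift bound on the time-varying maximizer. -/
theorem maximizer_drift_bound (f : ℕ → ℤ → ℝ) (Δ Lb Lk : ℝ)
    (hΔ : 0 < Δ) (hLb : 0 < Lb) (hLk : 0 < Lk) (ιs : ℕ → ℤ)
    (hmax : ∀ k : ℕ, ∀ i : ℤ, i ≠ ιs k → f k i < f k (ιs k))
    (ha : ∀ k : ℕ, ∀ i : ℤ,
      f k (ιs k) - f k i ≥ Lb * Δ / 2 * ((i : ℝ) - (ιs k : ℝ)) ^ 2)
    (hb : ∀ k : ℕ, ∀ i : ℤ, |f (k + 1) i - f k i| ≤ Lk) :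
    ∀ k N : ℕ,
      |(ιs (k + N) : ℝ) - (ιs k : ℝ)| * Δ ≤ 2 * Real.sqrt (Lk * Δ * (N : ℝ) / Lb) :=
  maximizer_drift_bound_general f Δ Lb Lk hΔ hLb ιs ha hb
end

section
/- Let ρ, L_k > 0, λ ∈ (0, 1/2], k ∈ ℕ, p ∈ ℕ with p ≤ k, and let J ⊆ {0,…,k} be a nonempty finite set with max J = p. Suppose y : ℕ → ℝ and F ∈ ℝ satisfy |y(j) − F| ≤ ρ + (k+1−j)·L_k for all j ∈ J. Then the weighted mean μ = (Σ_{j∈J} λ^(k+1−j)·y(j))/(Σ_{j∈J} λ^(k+1−j)) satisfies |μ − F| ≤ ρ + (2(k+1−p) + 2)·L_k. -/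
/-! Each measurement is off by at most `ρ` plus `L_k` times its age `k + 1 - j`, so the weighted
mean is off by at most `ρ` plus `L_k` times the weighted mean age. The ages are distinct and at
least `q = k + 1 - p`, which is attained, so the mean age is at most
`∑_{m ≥ q} m λ^m / λ^q = q / (1 - λ) + λ / (1 - λ)²`, and this is at most `2q + 2` for `λ ≤ 1/2`. -/

open Finset

theorem abs_weighted_mean_sub_le {ι : Type*} {s : Finset ι} {w x b : ι → ℝ} {c : ℝ}
    (hw : ∀ i ∈ s, 0 ≤ w i) (hW : 0 < ∑ i ∈ s, w i) (hx : ∀ i ∈ s, |x i - c| ≤ b i) :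
    |(∑ i ∈ s, w i * x i) / (∑ i ∈ s, w i) - c| ≤ (∑ i ∈ s, w i * b i) / ∑ i ∈ s, w i := by
  have hmean : (∑ i ∈ s, w i * x i) / (∑ i ∈ s, w i) - c
      = (∑ i ∈ s, w i * (x i - c)) / ∑ i ∈ s, w i := by
    simp only [mul_sub, sum_sub_distrib, ← sum_mul]
    field_simp
  rw [hmean, abs_div, abs_of_pos hW]
  gcongr
  calc |∑ i ∈ s, w i * (x i - c)|
      ≤ ∑ i ∈ s, |w i * (x i - c)| := abs_sum_le_sum_abs _ _
    _ ≤ ∑ i ∈ s, w i * b i := sum_le_sum fun i hi => by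
        rw [abs_mul, abs_of_nonneg (hw i hi)]
        exact mul_le_mul_of_nonneg_left (hx i hi) (hw i hi)

theorem hasSum_natCast_add_mul_geometric {r : ℝ} (h₀ : 0 ≤ r) (h₁ : r < 1) (q : ℕ) :
    HasSum (fun i : ℕ => ((q + i : ℕ) : ℝ) * r ^ (q + i))
      (r ^ q * (q / (1 - r) + r / (1 - r) ^ 2)) := by
  have hr : ‖r‖ < 1 := by rwa [Real.norm_of_nonneg h₀]
  have h := (((hasSum_geometric_of_lt_one h₀ h₁).mul_left (q : ℝ)).add
    (hasSum_coe_mul_geometric_of_norm_lt_one hr)).mul_left (r ^ q)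
  rw [← div_eq_mul_inv] at h
  exact h.congr_fun fun i => by push_cast; ring

theorem sum_natCast_mul_pow_le_of_le {r : ℝ} (h₀ : 0 ≤ r) (h₁ : r < 1) {q : ℕ} {S : Finset ℕ}
    (hS : ∀ m ∈ S, q ≤ m) :
    ∑ m ∈ S, (m : ℝ) * r ^ m ≤ r ^ q * (q / (1 - r) + r / (1 - r) ^ 2) := by
  have hinj : Set.InjOn (· - q) (S : Set ℕ) := fun a ha b hb hab => by
    have := hS a ha; have := hS b hb; simp only at hab; omega
  calc ∑ m ∈ S, (m : ℝ) * r ^ m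
      = ∑ m ∈ S, ((q + (m - q) : ℕ) : ℝ) * r ^ (q + (m - q)) :=
        sum_congr rfl fun m hm => by rw [Nat.add_sub_cancel' (hS m hm)]
    _ = ∑ i ∈ S.image (· - q), ((q + i : ℕ) : ℝ) * r ^ (q + i) :=
        (sum_image (f := fun i => ((q + i : ℕ) : ℝ) * r ^ (q + i)) hinj).symm
    _ ≤ _ := sum_le_hasSum _ (fun i _ => by positivity)
        (hasSum_natCast_add_mul_geometric h₀ h₁ q)

theorem sum_natCast_mul_pow_le_sum_pow_mul {ι : Type*} {s : Finset ι} {d : ι → ℕ} {r : ℝ}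
    (h₀ : 0 < r) (h₁ : r < 1) {q : ℕ} (hd : Set.InjOn d s) (hq : ∀ i ∈ s, q ≤ d i)
    {i₀ : ι} (hi₀ : i₀ ∈ s) (hdi₀ : d i₀ = q) :
    ∑ i ∈ s, (d i : ℝ) * r ^ d i ≤ (∑ i ∈ s, r ^ d i) * (q / (1 - r) + r / (1 - r) ^ 2) := by
  have htail : 0 ≤ (q : ℝ) / (1 - r) + r / (1 - r) ^ 2 := by
    have : 0 < 1 - r := by linarith
    positivity
  calc ∑ i ∈ s, (d i : ℝ) * r ^ d i
      = ∑ m ∈ s.image d, (m : ℝ) * r ^ m :=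
        (sum_image (f := fun m : ℕ => (m : ℝ) * r ^ m) hd).symm
    _ ≤ r ^ q * (q / (1 - r) + r / (1 - r) ^ 2) :=
        sum_natCast_mul_pow_le_of_le h₀.le h₁ (by simpa using hq)
    _ ≤ _ := by
        gcongr
        exact hdi₀ ▸ single_le_sum (f := fun i => r ^ d i) (fun i _ => by positivity) hi₀

theorem div_one_sub_add_div_one_sub_sq_le_of_le_half {r : ℝ} (h₁ : r ≤ 1 / 2) (q : ℕ) :
    (q : ℝ) / (1 - r) + r / (1 - r) ^ 2 ≤ 2 * q + 2 := by
  have hr : 1 / 2 ≤ 1 - r := by linarith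
  have hq : (q : ℝ) / (1 - r) ≤ 2 * q := by
    rw [div_le_iff₀ (by linarith)]; nlinarith [q.cast_nonneg (α := ℝ)]
  have hr' : r / (1 - r) ^ 2 ≤ 2 := by
    rw [div_le_iff₀ (by positivity)]; nlinarith
  linarith

theorem weighted_mean_error_bound_general (ρ Lk lam : ℝ) (hLk : 0 < Lk)
    (h0 : 0 < lam) (h1 : lam ≤ 1 / 2) (k p : ℕ)
    (J : Finset ℕ) (hne : J.Nonempty) (hJ : J ⊆ Finset.range (k + 1))
    (hmax : J.max' hne = p) (y : ℕ → ℝ) (F : ℝ)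
    (hy : ∀ j ∈ J, |y j - F| ≤ ρ + ((k : ℝ) + 1 - (j : ℝ)) * Lk) :
    |(∑ j ∈ J, lam ^ (k + 1 - j) * y j) / (∑ j ∈ J, lam ^ (k + 1 - j)) - F| ≤
      ρ + (2 * ((k : ℝ) + 1 - (p : ℝ)) + 2) * Lk := by
  have hp : p ∈ J := hmax ▸ J.max'_mem hne
  have hjp : ∀ j ∈ J, j ≤ p := fun j hj => hmax ▸ J.le_max' j hj
  have hjk : ∀ j ∈ J, j ≤ k := fun j hj => Nat.lt_succ_iff.mp (mem_range.mp (hJ hj))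
  have hage : ∀ j ∈ J, (k : ℝ) + 1 - j = ((k + 1 - j : ℕ) : ℝ) := fun j hj => by
    rw [Nat.cast_sub (by linarith [hjk j hj]), Nat.cast_succ]
  have hW : 0 < ∑ j ∈ J, lam ^ (k + 1 - j) := sum_pos (fun j _ => by positivity) hne
  have hmeanAge := sum_natCast_mul_pow_le_sum_pow_mul h0 (by linarith) (q := k + 1 - p)
    (fun a ha b hb (hab : k + 1 - a = k + 1 - b) => by have := hjk a ha; have := hjk b hb; omega)
    (fun j hj => by have := hjp j hj; omega) hp rfl
  calc _ ≤ (∑ j ∈ J, lam ^ (k + 1 - j) * (ρ + ((k + 1 - j : ℕ) : ℝ) * Lk))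
        / ∑ j ∈ J, lam ^ (k + 1 - j) :=
        abs_weighted_mean_sub_le (fun j _ => by positivity) hW fun j hj => hage j hj ▸ hy j hj
    _ ≤ _ := by
        rw [div_le_iff₀ hW, hage p hp, sum_congr rfl fun j _ => mul_add _ ρ _, sum_add_distrib,
          ← sum_mul]
        have hage_sum : ∑ j ∈ J, lam ^ (k + 1 - j) * (((k + 1 - j : ℕ) : ℝ) * Lk)
            = Lk * ∑ j ∈ J, ((k + 1 - j : ℕ) : ℝ) * lam ^ (k + 1 - j) := by
          rw [mul_sum]; exact sum_congr rfl fun j _ => by ring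
        rw [hage_sum]
        nlinarith [mul_le_mul_of_nonneg_left hmeanAge hLk.le,
          mul_le_mul_of_nonneg_left (div_one_sub_add_div_one_sub_sq_le_of_le_half h1 (k + 1 - p))
            (mul_nonneg hLk.le hW.le)]

/-- estimation-error bound for the exponentially weighted mean
    (case M = 0): |μ − F| ≤ ρ + (2(k+1−p) + 2)·L_k. -/
theorem weighted_mean_error_bound (ρ Lk lam : ℝ) (hρ : 0 < ρ) (hLk : 0 < Lk)
    (h0 : 0 < lam) (h1 : lam ≤ 1 / 2) (k p : ℕ) (hpk : p ≤ k)
    (J : Finset ℕ) (hne : J.Nonempty) (hJ : J ⊆ Finset.range (k + 1))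
    (hmax : J.max' hne = p) (y : ℕ → ℝ) (F : ℝ)
    (hy : ∀ j ∈ J, |y j - F| ≤ ρ + ((k : ℝ) + 1 - (j : ℝ)) * Lk) :
    |(∑ j ∈ J, lam ^ (k + 1 - j) * y j) / (∑ j ∈ J, lam ^ (k + 1 - j)) - F| ≤
      ρ + (2 * ((k : ℝ) + 1 - (p : ℝ)) + 2) * Lk :=
  weighted_mean_error_bound_general ρ Lk lam hLk h0 h1 k p J hne hJ hmax y F hy
end
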